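/- Let G be a graph, Ω a potential maximal clique of G, and D a connected component of G − Ω. Then N(D) is a minimal separator of G and D is a full component for N(D). -/

import Mathlib

open SimpleGraph

variable {V : Type*}

/-- Open neighborhood of a set: vertices outside `D` with a neighbor in `D`. -/
def nbhdSet (G : SimpleGraph V) (D : Set V) : Set V :=
  {v | v ∉ D ∧ ∃ d ∈ D, G.Adj v d}

/-- `D` is a connected component of `G - X`. -/
def IsCompOf (G : SimpleGraph V) (X : Set V) (D : Set V) : Prop :=
  D.Nonempty ∧ D ⊆ Xᶜ ∧ (G.induce D).Connected ∧
    ∀ u ∈ D, ∀ w, w ∉ X → G.Adj u w → w ∈ D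

/-- `D` is a full component for `X`: a component of `G - X` with `N(D) = X`. -/
def IsFullComp (G : SimpleGraph V) (X D : Set V) : Prop :=
  IsCompOf G X D ∧ nbhdSet G D = X

/-- `X` is an `s,t`-separator. -/
def IsSep (G : SimpleGraph V) (X : Set V) (s t : V) : Prop :=
  ∃ (hs : s ∉ X) (ht : t ∉ X),
    ¬ (G.induce (Xᶜ : Set V)).Reachable ⟨s, hs⟩ ⟨t, ht⟩

/-- `X` is a minimal separator: an inclusion-wise minimal `s,t`-separator for some `s,t`. -/
def IsMinSep (G : SimpleGraph V) (X : Set V) : Prop :=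
  ∃ s t, IsSep G X s t ∧ ∀ Y ⊆ X, IsSep G Y s t → Y = X

/-- No induced cycle of length at least 5. -/
def LongHoleFree (G : SimpleGraph V) : Prop :=
  ∀ n, 5 ≤ n → IsEmpty (SimpleGraph.cycleGraph n ↪g G)

/-- The `k`-prism: two `k`-cliques joined by a perfect matching. -/
def prism (k : ℕ) : SimpleGraph (Fin k ⊕ Fin k) where
  Adj x y := match x, y with
    | Sum.inl i, Sum.inl j => i ≠ j
    | Sum.inr i, Sum.inr j => i ≠ j
    | Sum.inl i, Sum.inr j => i = j
    | Sum.inr i, Sum.inl j => i = j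
  symm := by constructor; rintro (i|i) (j|j) h <;> exact h.symm
  loopless := by constructor; rintro (i|i) h <;> exact h rfl

/-- Chordal: no induced cycle of length at least 4. -/
def IsChordal (G : SimpleGraph V) : Prop :=
  ∀ n, 4 ≤ n → IsEmpty (SimpleGraph.cycleGraph n ↪g G)

/-- `Ω` is an inclusion-wise maximal clique of `G`. -/
def IsMaxClique (G : SimpleGraph V) (Ω : Set V) : Prop :=
  G.IsClique Ω ∧ ∀ Ω', G.IsClique Ω' → Ω ⊆ Ω' → Ω' = Ω

/-- `Ω` is a potential maximal clique of `G`: a maximal clique of some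
minimal chordal completion of `G`. -/
def IsPMC (G : SimpleGraph V) (Ω : Set V) : Prop :=
  ∃ H : SimpleGraph V, G ≤ H ∧ IsChordal H ∧
    (∀ H', G ≤ H' → H' ≤ H → IsChordal H' → H' = H) ∧ IsMaxClique H Ω

/-- The family of full components of `G - S`. -/
def fullComps (G : SimpleGraph V) (S : Set V) : Set (Set V) :=
  {D | IsFullComp G S D}

/-- `ζ_G(S) = max(0, #full components of G - S  - 1)`. -/
noncomputable def zeta (G : SimpleGraph V) (S : Set V) : ℕ :=
  (fullComps G S).ncard - 1


lemma cycle_adj_iff {m : ℕ} {u v : Fin (m+2)} :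
    (cycleGraph (m+2)).Adj u v ↔ u = v + 1 ∨ v = u + 1 := by
  rw [cycleGraph_adj, sub_eq_iff_eq_add, sub_eq_iff_eq_add,
    add_comm (1 : Fin (m+2)) u, add_comm (1 : Fin (m+2)) v]

lemma fin_succ_iff {k : ℕ} (a b : Fin (k+2)) :
    a = b + 1 ↔ (a.val = b.val + 1 ∨ (b.val = k + 1 ∧ a.val = 0)) := by
  rw [Fin.ext_iff, Fin.val_add, Fin.val_one]
  rcases Nat.lt_or_ge (b.val + 1) (k+2) with h | h
  · rw [Nat.mod_eq_of_lt h]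
    constructor
    · exact fun hh => Or.inl hh
    · rintro (hh | ⟨hb, _⟩)
      · exact hh
      · omega
  · have hb : b.val = k + 1 := by have := b.isLt; omega
    have h0 : (b.val + 1) % (k+2) = 0 := by rw [hb]; exact Nat.mod_self (k+2)
    rw [h0]
    constructor
    · exact fun hh => Or.inr ⟨hb, hh⟩
    · rintro (hh | ⟨_, ha⟩)
      · have := a.isLt; omega
      · exact ha

lemma chordal_no_cycle_seq {W : Type*} {G : SimpleGraph W} (hG : IsChordal G)
    {m : ℕ} (hm : 4 ≤ m) (w : ℕ → W)
    (hinj : ∀ i j, i < j → j < m → w i ≠ w j)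
    (hstep : ∀ i, i + 1 < m → G.Adj (w i) (w (i + 1)))
    (hwrap : G.Adj (w (m - 1)) (w 0))
    (hchord : ∀ i j, i + 2 ≤ j → j < m → ¬(i = 0 ∧ j = m - 1) → ¬G.Adj (w i) (w j)) :
    False := by
  obtain ⟨k, rfl⟩ : ∃ k, m = k + 2 := ⟨m - 2, by omega⟩
  have hiff : ∀ a b : Fin (k+2), G.Adj (w a.val) (w b.val) ↔ (cycleGraph (k+2)).Adj a b := by
    intro a b
    rw [cycle_adj_iff, fin_succ_iff, fin_succ_iff]
    have hav := a.isLt; have hbv := b.isLt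
    constructor
    · intro hadj
      rcases lt_trichotomy a.val b.val with h | h | h
      · rcases Nat.lt_or_ge b.val (a.val + 2) with h2 | h2
        · right; left; omega
        · by_cases hc : a.val = 0 ∧ b.val = k + 2 - 1
          · left; right; omega
          · exact absurd hadj (hchord a.val b.val h2 hbv hc)
      · exact absurd (congrArg w h) hadj.ne
      · rcases Nat.lt_or_ge a.val (b.val + 2) with h2 | h2
        · left; left; omega
        · by_cases hc : b.val = 0 ∧ a.val = k + 2 - 1
          · right; right; omega
          · exact absurd hadj.symm (hchord b.val a.val h2 hav hc)
    · intro h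
      rcases h with (h | ⟨h1, h2⟩) | (h | ⟨h1, h2⟩)
      · rw [h]; exact (hstep b.val (by omega)).symm
      · rw [h1, h2]
        have : k + 1 = k + 2 - 1 := by omega
        rw [this]; exact hwrap.symm
      · rw [h]; exact hstep a.val (by omega)
      · rw [h1, h2]
        have : k + 1 = k + 2 - 1 := by omega
        rw [this]; exact hwrap
  have finj : Function.Injective (fun i : Fin (k+2) => w i.val) := by
    intro a b hab
    by_contra hne
    rcases lt_trichotomy a.val b.val with h | h | h
    · exact hinj a.val b.val h b.isLt hab
    · exact hne (Fin.ext h)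
    · exact hinj b.val a.val h a.isLt hab.symm
  exact (hG (k+2) hm).false ⟨⟨fun i => w i.val, finj⟩, fun {a b} => hiff a b⟩

lemma exists_min_seq {W : Type*} {K : SimpleGraph W} {u v : W} (h : K.Reachable u v) :
    ∃ (n : ℕ) (w : ℕ → W), w 0 = u ∧ w n = v ∧ (∀ i, i < n → K.Adj (w i) (w (i + 1))) ∧
      (∀ i j, i < j → j ≤ n → w i ≠ w j) ∧
      (∀ i j, i + 2 ≤ j → j ≤ n → ¬K.Adj (w i) (w j)) := by
  classical
  have hex : ∃ n, ∃ w : ℕ → W, w 0 = u ∧ w n = v ∧ ∀ i, i < n → K.Adj (w i) (w (i + 1)) := by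
    obtain ⟨p⟩ := h
    exact ⟨p.length, p.getVert, p.getVert_zero, p.getVert_length,
      fun i hi => p.adj_getVert_succ hi⟩
  obtain ⟨w, hw0, hwn, hstep⟩ := Nat.find_spec hex
  set n := Nat.find hex with hn
  refine ⟨n, w, hw0, hwn, hstep, ?_, ?_⟩
  · intro i j hij hjn heq
    have hP : ∃ w' : ℕ → W, w' 0 = u ∧ w' (n - (j - i)) = v ∧
        ∀ p, p < n - (j - i) → K.Adj (w' p) (w' (p + 1)) := by
      refine ⟨fun p => if p ≤ i then w p else w (p + (j - i)), by simp [hw0], ?_, ?_⟩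
      · show (if n - (j - i) ≤ i then w (n - (j - i)) else w (n - (j - i) + (j - i))) = v
        by_cases hc : n - (j - i) ≤ i
        · have h1 : n - (j - i) = i := by omega
          have h2 : j = n := by omega
          rw [if_pos hc, h1, heq, h2, hwn]
        · rw [if_neg hc]
          have h3 : n - (j - i) + (j - i) = n := by omega
          rw [h3, hwn]
      · intro p hp
        show K.Adj (if p ≤ i then w p else w (p + (j - i)))
          (if p + 1 ≤ i then w (p + 1) else w (p + 1 + (j - i)))
        by_cases h1 : p + 1 ≤ i
        · rw [if_pos (by omega : p ≤ i), if_pos h1]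
          exact hstep p (by omega)
        · by_cases h2 : p ≤ i
          · rw [if_pos h2, if_neg h1]
            have hpi : p = i := by omega
            rw [hpi, heq]
            have h4 : i + 1 + (j - i) = j + 1 := by omega
            rw [h4]
            exact hstep j (by omega)
          · rw [if_neg h2, if_neg h1]
            have h4 : p + 1 + (j - i) = p + (j - i) + 1 := by omega
            rw [h4]
            exact hstep (p + (j - i)) (by omega)
    exact Nat.find_min hex (show n - (j - i) < n by omega) hP
  · intro i j hij hjn hadj
    have hP : ∃ w' : ℕ → W, w' 0 = u ∧ w' (n - (j - i - 1)) = v ∧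
        ∀ p, p < n - (j - i - 1) → K.Adj (w' p) (w' (p + 1)) := by
      refine ⟨fun p => if p ≤ i then w p else w (p + (j - i - 1)), by simp [hw0], ?_, ?_⟩
      · show (if n - (j - i - 1) ≤ i then w (n - (j - i - 1))
            else w (n - (j - i - 1) + (j - i - 1))) = v
        rw [if_neg (by omega)]
        have h3 : n - (j - i - 1) + (j - i - 1) = n := by omega
        rw [h3, hwn]
      · intro p hp
        show K.Adj (if p ≤ i then w p else w (p + (j - i - 1)))
          (if p + 1 ≤ i then w (p + 1) else w (p + 1 + (j - i - 1)))
        by_cases h1 : p + 1 ≤ i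
        · rw [if_pos (by omega : p ≤ i), if_pos h1]
          exact hstep p (by omega)
        · by_cases h2 : p ≤ i
          · rw [if_pos h2, if_neg h1]
            have hpi : p = i := by omega
            have h4 : p + 1 + (j - i - 1) = j := by omega
            rw [hpi] at h4 ⊢
            rw [h4]
            exact hadj
          · rw [if_neg h2, if_neg h1]
            have h4 : p + 1 + (j - i - 1) = p + (j - i - 1) + 1 := by omega
            rw [h4]
            exact hstep (p + (j - i - 1)) (by omega)
    exact Nat.find_min hex (show n - (j - i - 1) < n by omega) hP

lemma exists_common_nbr {W : Type*} {H : SimpleGraph W} (hH : IsChordal H)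
    {C : Set W} (hCne : C.Nonempty) (hconn : (H.induce C).Connected)
    (K : Finset W) (hK : H.IsClique (K : Set W)) (hdisj : ∀ y ∈ K, y ∉ C)
    (hN : ∀ y ∈ K, ∃ d ∈ C, H.Adj y d) :
    ∃ c ∈ C, ∀ y ∈ K, H.Adj y c := by
  classical
  induction K using Finset.induction_on with
  | empty => exact ⟨hCne.choose, hCne.choose_spec, by simp⟩
  | @insert x K₀ hxK ih =>
    obtain ⟨c', hc'C, hc'⟩ := ih (hK.subset (by simp))
      (fun y hy => hdisj y (Finset.mem_insert_of_mem hy))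
      (fun y hy => hN y (Finset.mem_insert_of_mem hy))
    have hxC : x ∉ C := hdisj x (Finset.mem_insert_self _ _)
    by_cases hxc' : H.Adj x c'
    · refine ⟨c', hc'C, fun y hy => ?_⟩
      rcases Finset.mem_insert.1 hy with rfl | hy
      · exact hxc'
      · exact hc' y hy
    · -- build geodesic from x to c' through insert x C
      set T : Set W := insert x C with hT
      have hxT : x ∈ T := Set.mem_insert _ _
      have hCT : C ⊆ T := Set.subset_insert _ _
      obtain ⟨d, hdC, hxd⟩ := hN x (Finset.mem_insert_self _ _)
      have hreach : (H.induce T).Reachable ⟨x, hxT⟩ ⟨c', hCT hc'C⟩ := by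
        have r1 : (H.induce T).Adj ⟨x, hxT⟩ ⟨d, hCT hdC⟩ := by simpa using hxd
        have r2 : (H.induce C).Reachable ⟨d, hdC⟩ ⟨c', hc'C⟩ := hconn.preconnected _ _
        exact r1.reachable.trans (r2.map (H.induceHomOfLE hCT).toHom)
      obtain ⟨n, ω, h0, hn, hstep, hinj, hnadj⟩ := exists_min_seq hreach
      set w : ℕ → W := fun i => (ω i).val with hw
      have hw0 : w 0 = x := by rw [hw]; simp [h0]
      have hwn : w n = c' := by rw [hw]; simp [hn]
      have hstepH : ∀ i, i < n → H.Adj (w i) (w (i + 1)) := fun i hi => by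
        simpa using hstep i hi
      have hinjW : ∀ i j, i < j → j ≤ n → w i ≠ w j := fun i j hij hjn heq =>
        hinj i j hij hjn (Subtype.ext heq)
      have hnadjH : ∀ i j, i + 2 ≤ j → j ≤ n → ¬H.Adj (w i) (w j) := fun i j hij hjn hadj =>
        hnadj i j hij hjn (by simpa using hadj)
      have hn2 : 2 ≤ n := by
        rcases Nat.lt_or_ge n 2 with h | h
        · exfalso
          have h01 : n = 0 ∨ n = 1 := by omega
          rcases h01 with h0 | h0
          · apply hxC
            have hxc : x = c' := by rw [← hw0, ← hwn, h0]
            exact hxc ▸ hc'C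
          · apply hxc'
            have h' := hstepH 0 (by omega)
            rw [hw0] at h'
            rw [show (0 + 1 : ℕ) = n from by omega, hwn] at h'
            exact h'
        · exact h
      have hwC : ∀ i, 1 ≤ i → i ≤ n → w i ∈ C := by
        intro i h1 h2
        rcases ((ω i).2 : (ω i).val ∈ insert x C) with he | hc
        · exact absurd (hw0.trans he.symm) (hinjW 0 i (by omega) h2)
        · exact hc
      have hy1 : ∀ y ∈ K₀, H.Adj y (w 1) := by
        intro y hyK₀
        have hyx : y ≠ x := fun he => hxK (he ▸ hyK₀)
        have hyadjx : H.Adj y x := hK (by simp [hyK₀]) (by simp) hyx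
        have hyC : y ∉ C := hdisj y (Finset.mem_insert_of_mem hyK₀)
        have hyne : ∀ i, i ≤ n → y ≠ w i := by
          intro i hi he
          rcases ((ω i).2 : (ω i).val ∈ insert x C) with h' | h'
          · exact hyx (he.trans h')
          · exact hyC (he ▸ h')
        have Qex : ∃ k, 1 ≤ k ∧ H.Adj y (w k) := ⟨n, by omega, hwn ▸ hc' y hyK₀⟩
        set j := Nat.find Qex with hj
        obtain ⟨hj1, hjadj⟩ := Nat.find_spec Qex
        have hjn : j ≤ n := Nat.find_min' Qex ⟨by omega, hwn ▸ hc' y hyK₀⟩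
        have hjeq : j = 1 := by
          by_contra hne
          have hj2 : 2 ≤ j := by omega
          -- build induced cycle of length j + 2
          set w' : ℕ → W := fun p => if p ≤ j then w p else y with hw'
          have hcyc := chordal_no_cycle_seq hH (show 4 ≤ j + 2 by omega) w' ?_ ?_ ?_ ?_
          · exact hcyc
          · intro i i' hii' hi'
            show (if i ≤ j then w i else y) ≠ (if i' ≤ j then w i' else y)
            by_cases h2 : i' ≤ j
            · rw [if_pos (by omega), if_pos h2]
              exact hinjW i i' hii' (by omega)
            · rw [if_pos (by omega), if_neg h2]
              exact (hyne i (by omega)).symm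
          · intro i hi
            show H.Adj (if i ≤ j then w i else y) (if i + 1 ≤ j then w (i+1) else y)
            by_cases h2 : i + 1 ≤ j
            · rw [if_pos (by omega), if_pos h2]
              exact hstepH i (by omega)
            · rw [if_pos (by omega), if_neg h2]
              have : i = j := by omega
              rw [this]
              exact hjadj.symm
          · show H.Adj (if j + 2 - 1 ≤ j then w (j + 2 - 1) else y) (if 0 ≤ j then w 0 else y)
            rw [if_neg (by omega), if_pos (by omega), hw0]
            exact hyadjx
          · intro i i' hii' hi' hcor
            show ¬ H.Adj (if i ≤ j then w i else y) (if i' ≤ j then w i' else y)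
            by_cases h2 : i' ≤ j
            · rw [if_pos (by omega), if_pos h2]
              exact hnadjH i i' hii' (by omega)
            · have hi'j : i' = j + 1 := by omega
              have hi0 : 1 ≤ i := by
                rcases Nat.eq_zero_or_pos i with h0 | h0
                · exact absurd ⟨h0, by omega⟩ hcor
                · exact h0
              rw [if_pos (by omega), if_neg h2]
              intro hadj
              exact Nat.find_min Qex (show i < j by omega) ⟨hi0, hadj.symm⟩
        rw [← hjeq]
        exact hjadj
      refine ⟨w 1, hwC 1 le_rfl (by omega), fun y hy => ?_⟩
      rcases Finset.mem_insert.1 hy with rfl | hy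
      · exact hw0 ▸ (hstepH 0 (by omega))
      · exact hy1 y hy

lemma induce_walk_transfer {W : Type*} {G : SimpleGraph W} {A B : Set W} :
    ∀ {a b : ↥A} (p : (G.induce A).Walk a b), (∀ z ∈ p.support, (z : W) ∈ B) →
      ∀ (ha : (a : W) ∈ B) (hb : (b : W) ∈ B), (G.induce B).Reachable ⟨a, ha⟩ ⟨b, hb⟩ := by
  intro a b p
  induction p with
  | nil => exact fun _ _ _ => Reachable.refl _
  | @cons u m b h q ih =>
    intro hs ha hb
    have hmB : (m : W) ∈ B := hs m (by simp)
    have hadj : (G.induce B).Adj ⟨u, ha⟩ ⟨m, hmB⟩ := by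
      simpa using (by simpa using h : G.Adj (u : W) (m : W))
    exact hadj.reachable.trans (ih (fun z hz => hs z (by simp [hz])) hmB hb)

lemma walk_stay {W : Type*} {G : SimpleGraph W} {D : Set W} :
    ∀ {a b : ↥(nbhdSet G D)ᶜ} (_ : (G.induce (nbhdSet G D)ᶜ).Walk a b), (a : W) ∈ D → (b : W) ∈ D := by
  intro a b p
  induction p with
  | nil => exact id
  | @cons u m b h q ih =>
    intro hu
    apply ih
    by_contra hmD
    exact m.2 ⟨hmD, u, hu, (by simpa using h : G.Adj (u : W) (m : W)).symm⟩

open Fin.NatCast in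
lemma pmc_cliquish {W : Type*} {G H : SimpleGraph W} (hGH : G ≤ H)
    (hH : IsChordal H)
    (hmin : ∀ H', G ≤ H' → H' ≤ H → IsChordal H' → H' = H)
    {Ω : Set W} (hclq : H.IsClique Ω) {x y : W} (hx : x ∈ Ω) (hy : y ∈ Ω) (hxy : x ≠ y)
    (hxT : x ∈ (Ω \ {x, y})ᶜ) (hyT : y ∈ (Ω \ {x, y})ᶜ) :
    (G.induce (Ω \ {x, y})ᶜ).Reachable ⟨x, hxT⟩ ⟨y, hyT⟩ := by
  classical
  by_contra hreach
  set T : Set W := (Ω \ {x, y})ᶜ with hTdef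
  set A : Set W := {v | ∃ h : v ∈ T, (G.induce T).Reachable ⟨x, hxT⟩ ⟨v, h⟩} with hAdef
  have hxA : x ∈ A := ⟨hxT, Reachable.refl _⟩
  have hAT : ∀ v ∈ A, v ∈ T := fun v hv => hv.1
  have hyA : y ∉ A := fun hv => hreach hv.2
  have hAcl : ∀ u ∈ A, ∀ v, G.Adj u v → v ∈ T → v ∈ A := by
    rintro u ⟨hu, hru⟩ v hadj hvT
    exact ⟨hvT, hru.trans (SimpleGraph.Adj.reachable (by simpa using hadj))⟩
  set R : Set W := {v | v ∉ A ∧ v ∉ Ω \ {x, y}} with hRdef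
  have hyR : y ∈ R := ⟨hyA, hyT⟩
  have hAR : ∀ v, v ∈ A → v ∉ R := fun v hv hr => hr.1 hv
  have hΩA : ∀ v, v ∈ Ω \ {x, y} → v ∉ A := fun v hv hvA => (hAT v hvA) hv
  have hΩR : ∀ v, v ∈ Ω \ {x, y} → v ∉ R := fun v hv hr => hr.2 hv
  have tricho : ∀ v, v ∉ A → v ∉ R → v ∈ Ω \ {x, y} := by
    intro v h1 h2
    by_contra h3
    exact h2 ⟨h1, h3⟩
  set H' : SimpleGraph W :=
    { Adj := fun u v => H.Adj u v ∧ ¬(u ∈ A ∧ v ∈ R) ∧ ¬(u ∈ R ∧ v ∈ A)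
      symm := by
        constructor
        rintro u v ⟨h1, h2, h3⟩
        exact ⟨h1.symm, fun hc => h3 ⟨hc.2, hc.1⟩, fun hc => h2 ⟨hc.2, hc.1⟩⟩
      loopless := ⟨fun v h => H.loopless.irrefl v h.1⟩ } with hH'def
  have hGH' : G ≤ H' := by
    intro u v h
    refine ⟨hGH h, ?_, ?_⟩
    · rintro ⟨huA, hvR⟩
      exact hvR.1 (hAcl u huA v h hvR.2)
    · rintro ⟨huR, hvA⟩
      exact huR.1 (hAcl v hvA u h.symm huR.2)
  have hH'H : H' ≤ H := by
    intro u v h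
    exact h.1
  have hH'ne : H' ≠ H := by
    intro he
    have hadj : H'.Adj x y := he ▸ (hclq hx hy hxy)
    exact hadj.2.1 ⟨hxA, hyR⟩
  have hH'nc : ¬ IsChordal H' := fun hc => hH'ne (hmin H' hGH' hH'H hc)
  rw [IsChordal] at hH'nc
  push_neg at hH'nc
  obtain ⟨n, hn4, hne⟩ := hH'nc
  obtain ⟨f⟩ := hne
  obtain ⟨N, rfl⟩ : ∃ N, n = N + 2 := ⟨n - 2, by omega⟩
  have key : (∀ i, f i ∉ A) ∨ (∀ i, f i ∉ R) := by
    by_contra hk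
    push_neg at hk
    obtain ⟨⟨a, ha⟩, ⟨b, hb⟩⟩ := hk
    set g : ℕ → Fin (N + 2) := fun p => a + (p : Fin (N + 2)) with hgdef
    have hg0 : g 0 = a := by simp [hgdef]
    have hgsucc : ∀ p, g (p + 1) = g p + 1 := by
      intro p
      simp only [hgdef, Nat.cast_add, Nat.cast_one]
      abel
    have hstep1 : ∀ p, H'.Adj (f (g p)) (f (g (p + 1))) := by
      intro p
      apply f.map_rel_iff.mpr
      rw [cycle_adj_iff]
      right
      exact hgsucc p
    have s1A : ∀ p, f (g p) ∈ A → f (g (p + 1)) ∉ R :=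
      fun p h1 h2 => (hstep1 p).2.1 ⟨h1, h2⟩
    have s1R : ∀ p, f (g p) ∈ R → f (g (p + 1)) ∉ A :=
      fun p h1 h2 => (hstep1 p).2.2 ⟨h1, h2⟩
    have hab : a ≠ b := by
      intro he
      exact hAR _ ha (he ▸ hb)
    set m : ℕ := (b - a : Fin (N + 2)).val with hmdef
    have hgm : g m = b := by
      rw [hgdef]
      show a + ((((b - a : Fin (N+2))).val : ℕ) : Fin (N + 2)) = b
      rw [Fin.cast_val_eq_self]
      abel
    have hm1 : 1 ≤ m := by
      rcases Nat.eq_zero_or_pos m with h0 | h0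
      · exfalso
        apply hab
        have hba : b - a = 0 := by
          apply Fin.ext
          exact h0
        exact (eq_of_sub_eq_zero hba).symm
      · exact h0
    have hmN : m < N + 2 := (b - a).isLt
    have hgn : g (N + 2) = a := by
      rw [hgdef]
      simp
    have ex1 : ∃ p, f (g p) ∉ A := ⟨m, by rw [hgm]; exact fun h => hAR _ h hb⟩
    set k1 := Nat.find ex1 with hk1def
    have hk1spec : f (g k1) ∉ A := Nat.find_spec ex1
    have hk1m : k1 ≤ m := Nat.find_min' ex1 (by rw [hgm]; exact fun h => hAR _ h hb)
    have hk1pos : 1 ≤ k1 := by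
      rcases Nat.eq_zero_or_pos k1 with h0 | h0
      · exfalso
        apply hk1spec
        rw [h0, hg0]
        exact ha
      · exact h0
    have hk1A : f (g (k1 - 1)) ∈ A := by
      have h' := Nat.find_min ex1 (show k1 - 1 < k1 by omega)
      rw [not_not] at h'
      exact h'
    have hk1R : f (g k1) ∉ R := by
      have h' := s1A (k1 - 1) hk1A
      rwa [show k1 - 1 + 1 = k1 by omega] at h'
    have hk1Ω : f (g k1) ∈ Ω \ {x, y} := tricho _ hk1spec hk1R
    have hk1m' : k1 < m := by
      rcases Nat.lt_or_ge k1 m with h' | h'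
      · exact h'
      · exfalso
        have he : k1 = m := by omega
        rw [he, hgm] at hk1R
        exact hk1R hb
    have ex2 : ∃ p, m < p ∧ f (g p) ∉ R :=
      ⟨N + 2, by omega, by rw [hgn]; exact hAR _ ha⟩
    set k2 := Nat.find ex2 with hk2def
    obtain ⟨hk2m, hk2spec⟩ : m < k2 ∧ f (g k2) ∉ R := Nat.find_spec ex2
    have hk2n : k2 ≤ N + 2 := Nat.find_min' ex2 ⟨by omega, by rw [hgn]; exact hAR _ ha⟩
    have hk2R : f (g (k2 - 1)) ∈ R := by
      rcases Nat.lt_or_ge m (k2 - 1) with h' | h'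
      · have hmin2 := Nat.find_min ex2 (show k2 - 1 < k2 by omega)
        push_neg at hmin2
        exact hmin2 h'
      · have he : k2 - 1 = m := by omega
        rw [he, hgm]
        exact hb
    have hk2A : f (g k2) ∉ A := by
      have h' := s1R (k2 - 1) hk2R
      rwa [show k2 - 1 + 1 = k2 by omega] at h'
    have hk2Ω : f (g k2) ∈ Ω \ {x, y} := tricho _ hk2A hk2spec
    have hk2n' : k2 < N + 2 := by
      rcases Nat.lt_or_ge k2 (N + 2) with h' | h'
      · exact h'
      · exfalso
        have he : k2 = N + 2 := by omega
        rw [he, hgn] at hk2A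
        exact hk2A ha
    have hgval : ∀ p, (g p).val = (a.val + p) % (N + 2) := by
      intro p
      show ((a + (p : Fin (N+2))).val) = _
      rw [Fin.val_add, Fin.val_natCast]
      conv_rhs => rw [Nat.add_mod, Nat.mod_eq_of_lt a.isLt]
    have hgne : g k1 ≠ g k2 := by
      intro he
      have h2 : (a.val + k1) % (N + 2) = (a.val + k2) % (N + 2) := by
        have := congrArg Fin.val he
        rwa [hgval, hgval] at this
      have h3 : k1 % (N + 2) = k2 % (N + 2) := Nat.ModEq.add_left_cancel' a.val h2
      rw [Nat.mod_eq_of_lt (by omega), Nat.mod_eq_of_lt (by omega)] at h3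
      omega
    have hfne : f (g k1) ≠ f (g k2) := fun he => hgne (f.injective he)
    have hHadj : H.Adj (f (g k1)) (f (g k2)) := hclq hk1Ω.1 hk2Ω.1 hfne
    have hH'adj : H'.Adj (f (g k1)) (f (g k2)) :=
      ⟨hHadj, fun hc => hΩA _ hk1Ω hc.1, fun hc => hΩR _ hk1Ω hc.1⟩
    have hcyc := f.map_rel_iff.mp hH'adj
    rw [cycle_adj_iff] at hcyc
    rcases hcyc with hce | hce
    · -- g k1 = g k2 + 1
      have h1 : g k1 = g (k2 + 1) := by rw [hgsucc]; exact hce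
      have h2 : (a.val + k1) % (N + 2) = (a.val + (k2 + 1)) % (N + 2) := by
        have := congrArg Fin.val h1
        rwa [hgval, hgval] at this
      have h3 : k1 % (N + 2) = (k2 + 1) % (N + 2) := Nat.ModEq.add_left_cancel' a.val h2
      rw [Nat.mod_eq_of_lt (show k1 < N + 2 by omega)] at h3
      rcases Nat.lt_or_ge (k2 + 1) (N + 2) with hlt | hge
      · rw [Nat.mod_eq_of_lt hlt] at h3
        omega
      · have he2 : k2 + 1 = N + 2 := by omega
        rw [he2, Nat.mod_self] at h3
        omega
    · -- g k2 = g k1 + 1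
      have h1 : g k2 = g (k1 + 1) := by rw [hgsucc]; exact hce
      have h2 : (a.val + k2) % (N + 2) = (a.val + (k1 + 1)) % (N + 2) := by
        have := congrArg Fin.val h1
        rwa [hgval, hgval] at this
      have h3 : k2 % (N + 2) = (k1 + 1) % (N + 2) := Nat.ModEq.add_left_cancel' a.val h2
      rw [Nat.mod_eq_of_lt (show k2 < N + 2 by omega),
        Nat.mod_eq_of_lt (show k1 + 1 < N + 2 by omega)] at h3
      omega
  rcases key with hk | hk
  · exact (hH (N + 2) hn4).false
      { toEmbedding := f.toEmbedding
        map_rel_iff' := by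
          intro u v
          constructor
          · intro h
            exact f.map_rel_iff.mp ⟨h, fun hc => hk u hc.1, fun hc => hk v hc.2⟩
          · intro h
            exact (f.map_rel_iff.mpr h).1 }
  · exact (hH (N + 2) hn4).false
      { toEmbedding := f.toEmbedding
        map_rel_iff' := by
          intro u v
          constructor
          · intro h
            exact f.map_rel_iff.mp ⟨h, fun hc => hk v hc.2, fun hc => hk u hc.1⟩
          · intro h
            exact (f.map_rel_iff.mpr h).1 }

theorem stmt12 [Fintype V] (G : SimpleGraph V) (Ω : Set V) (hΩ : IsPMC G Ω)
    (D : Set V) (hD : IsCompOf G Ω D) :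
    IsMinSep G (nbhdSet G D) ∧ IsFullComp G (nbhdSet G D) D := by
  classical
  obtain ⟨H, hGH, hHchord, hmin, hmaxΩ⟩ := hΩ
  obtain ⟨hDne, hDΩ, hDconn, hDcl⟩ := hD
  have hDS : ∀ d ∈ D, d ∉ nbhdSet G D := fun d hd hdS => hdS.1 hd
  have hSΩ : nbhdSet G D ⊆ Ω := by
    rintro v ⟨hvD, d, hdD, hadj⟩
    by_contra hvΩ
    exact hvD (hDcl d hdD v hvΩ hadj.symm)
  have hclS : ∀ u ∈ D, ∀ w, w ∉ nbhdSet G D → G.Adj u w → w ∈ D := by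
    intro u hu w hwS hadj
    by_contra hwD
    exact hwS ⟨hwD, u, hu, hadj.symm⟩
  have hfull : IsFullComp G (nbhdSet G D) D :=
    ⟨⟨hDne, fun d hd => hDS d hd, hDconn, hclS⟩, rfl⟩
  -- there is a vertex of Ω outside S = N(D) (else D would be a full component of G - Ω)
  have htex : ∃ t, t ∈ Ω ∧ t ∉ nbhdSet G D := by
    by_contra hcon
    push_neg at hcon
    have hHconnD : (H.induce D).Connected := hDconn.mono (fun {a b} h => hGH h)
    have hfin : Ω.Finite := Set.toFinite Ω
    obtain ⟨c, hcD, hc⟩ := exists_common_nbr hHchord hDne hHconnD hfin.toFinset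
      (by rw [Set.Finite.coe_toFinset]; exact hmaxΩ.1)
      (fun z hz hzD => (hDΩ hzD) (hfin.mem_toFinset.mp hz))
      (fun z hz => by
        obtain ⟨_, d, hd, hadj⟩ := hcon z (hfin.mem_toFinset.mp hz)
        exact ⟨d, hd, hGH hadj⟩)
    have hclq2 : H.IsClique (insert c Ω) := by
      apply hmaxΩ.1.insert
      intro b hb hbc
      exact (hc b (hfin.mem_toFinset.mpr hb)).symm
    have heq := hmaxΩ.2 (insert c Ω) hclq2 (Set.subset_insert _ _)
    have hcΩ : c ∈ Ω := heq ▸ Set.mem_insert c Ω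
    exact (hDΩ hcD) hcΩ
  obtain ⟨t, htΩ, htS⟩ := htex
  obtain ⟨s, hsD⟩ := hDne
  have hsS : s ∉ nbhdSet G D := hDS s hsD
  -- step-off claim: every x ∈ S has a neighbor in the S-free side of t
  have hstepoff : ∀ x, x ∈ nbhdSet G D → ∃ c, ∃ hc : c ∉ nbhdSet G D, G.Adj x c ∧
      (G.induce (nbhdSet G D)ᶜ).Reachable ⟨c, hc⟩ ⟨t, htS⟩ := by
    intro x hxS
    have hxΩ : x ∈ Ω := hSΩ hxS
    have hxt : x ≠ t := fun h => htS (h ▸ hxS)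
    by_cases hadj : G.Adj x t
    · exact ⟨t, htS, hadj, Reachable.refl _⟩
    · have hreach := pmc_cliquish hGH hHchord hmin hmaxΩ.1 hxΩ htΩ hxt
        (by simp) (by simp)
      obtain ⟨p0⟩ := hreach
      set p1 : (G.induce (Ω \ {x, t})ᶜ).Walk ⟨x, by simp⟩ ⟨t, by simp⟩ :=
        (p0.toPath).val with hp1def
      have hp1path : p1.IsPath := p0.toPath.2
      have hne : (⟨x, by simp⟩ : ↥(Ω \ {x, t})ᶜ) ≠ ⟨t, by simp⟩ := by
        intro he
        exact hxt (congrArg Subtype.val he)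
      have hnil : ¬ p1.Nil := Walk.not_nil_of_ne hne
      have hadj1 := p1.adj_snd hnil
      have hcons : Walk.cons hadj1 p1.tail = p1 := p1.cons_tail_eq hnil
      have hp2 : p1.tail.IsPath ∧ (⟨x, by simp⟩ : ↥(Ω \ {x, t})ᶜ) ∉ p1.tail.support := by
        rw [← Walk.cons_isPath_iff (h := hadj1)]
        rw [hcons]
        exact hp1path
      have hsup : ∀ z ∈ p1.tail.support, (z : V) ∈ (nbhdSet G D)ᶜ := by
        intro z hz hzS
        have hzΩ : (z : V) ∈ Ω := hSΩ hzS
        have hzT : (z : V) ∈ (Ω \ {x, t})ᶜ := z.2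
        have hzxt : (z : V) ∈ ({x, t} : Set V) := by
          by_contra hno
          exact hzT ⟨hzΩ, hno⟩
        rcases hzxt with hzx | hzt
        · apply hp2.2
          have hze : z = (⟨x, by simp⟩ : ↥(Ω \ {x, t})ᶜ) := Subtype.ext hzx
          exact hze ▸ hz
        · exact htS (hzt ▸ hzS)
      have hmidS : ((p1.getVert 1 : ↥(Ω \ {x, t})ᶜ) : V) ∈ (nbhdSet G D)ᶜ :=
        hsup _ (Walk.start_mem_support _)
      refine ⟨(p1.getVert 1 : ↥(Ω \ {x, t})ᶜ), hmidS, by simpa using hadj1, ?_⟩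
      exact induce_walk_transfer p1.tail hsup hmidS htS
  -- walks in G - S starting in D stay in D
  have hsep : IsSep G (nbhdSet G D) s t := by
    refine ⟨hsS, htS, fun hr => ?_⟩
    obtain ⟨p⟩ := hr
    exact (hDΩ (walk_stay p hsD)) htΩ
  refine ⟨⟨s, t, hsep, ?_⟩, hfull⟩
  intro Y hYS hYsep
  obtain ⟨hsY, htY, hnr⟩ := hYsep
  apply Set.Subset.antisymm hYS
  intro x hxS
  by_contra hxY
  apply hnr
  obtain ⟨hxD, d, hdD, hadjxd⟩ := hxS
  have hDY : ∀ z, z ∈ D → z ∈ Yᶜ := fun z hz hzY => hDS z hz (hYS hzY)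
  have r1 : (G.induce Yᶜ).Reachable ⟨s, hsY⟩ ⟨d, hDY d hdD⟩ := by
    obtain ⟨pw⟩ := hDconn.preconnected ⟨s, hsD⟩ ⟨d, hdD⟩
    exact induce_walk_transfer pw (fun z _ => hDY z.val z.2) hsY (hDY d hdD)
  have r2 : (G.induce Yᶜ).Adj ⟨d, hDY d hdD⟩ ⟨x, hxY⟩ := by simpa using hadjxd.symm
  obtain ⟨c, hcS, hxc, hct⟩ := hstepoff x ⟨hxD, d, hdD, hadjxd⟩
  have hcY : c ∈ Yᶜ := fun hcY => hcS (hYS hcY)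
  have hSY : ((nbhdSet G D)ᶜ : Set V) ⊆ Yᶜ := Set.compl_subset_compl.mpr hYS
  have r3 : (G.induce Yᶜ).Adj ⟨x, hxY⟩ ⟨c, hcY⟩ := by simpa using hxc
  have r4 : (G.induce Yᶜ).Reachable ⟨c, hcY⟩ ⟨t, htY⟩ := by
    obtain ⟨pw⟩ := hct
    exact induce_walk_transfer pw (fun z _ => hSY z.2) hcY htY
  exact ((r1.trans r2.reachable).trans r3.reachable).trans r4
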